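/- arXiv:1704.02695 — 10 statements merged into one kernel-verified Lean document; each statement's English description precedes it below -/
import Mathlib

section
/- Let a, b, m, s : ℤ → ℂ be sequences such that a(n) ≠ 0 and b(n) ≠ 0 for every integer n, and such that the values s(n) are pairwise distinct (s(i) ≠ s(j) whenever i ≠ j). For integers k ≤ n define F(n,k) = (b(n)/b(k)) · ∏_{i=k+1}^{n} [ m(i) · (s(k) − s(i−1) + a(i−1)·b(i−1)·m(i−1)) / (s(k) − s(i)) ] and G(n,k) = (a(k)/a(n)) · ∏_{i=k}^{n−1} [ m(i) · (s(n) − s(i+1) + a(i+1)·b(i+1)·m(i+1)) / (s(n) − s(i)) ]. Then for all integers k ≤ n, ∑_{i=k}^{n} F(n,i)·G(i,k) equals 1 if n = k and equals 0 if n > k. -/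
open Polynomial Finset

/-!
Write `c j = a j * b j * m j`. After shifting indices, the `i`-th summand of `∑ F(n,i) G(i,k)`
has numerator `∏_{j=i}^{n-1} (s i - s j + c j) * ∏_{j=k+1}^{i} (s i - s j + c j)`, which is
`c i * P (s i)` for `P x = ∏_{k<j<n} (x - s j + c j)`; the factor `c i` cancels `a i * b i` and
supplies the missing `m i`. So for `k < n` the sum is a constant times
`∑_{i=k}^{n} P (s i) / ∏_{j ≠ i} (s i - s j)`, the coefficient of `x ^ (n - k)` in the Lagrange
interpolant of `P` at the nodes `s k, …, s n`. That interpolant is `P` itself, of degree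
`n - k - 1`, so the coefficient vanishes.
-/

theorem Lagrange.sum_eval_div_prod_sub_eq_zero {F ι : Type*} [Field F] [DecidableEq ι]
    {t : Finset ι} {v : ι → F} (hv : Set.InjOn v t) {P : F[X]} (hP : P.degree < ↑(#t - 1)) :
    ∑ i ∈ t, P.eval (v i) / ∏ j ∈ t.erase i, (v i - v j) = 0 := by
  rw [← coeff_eq_sum hv (hP.trans_le (by exact_mod_cast Nat.sub_le #t 1)),
    coeff_eq_zero_of_degree_lt hP]

namespace Int

variable {M : Type*} [CommMonoid M]

theorem prod_Icc_comp_sub_one (f : ℤ → M) (a b : ℤ) :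
    ∏ j ∈ Icc (a + 1) b, f (j - 1) = ∏ j ∈ Icc a (b - 1), f j :=
  prod_nbij' (· - 1) (· + 1) (by simp) (by simp) (by simp) (by simp) (by simp)

theorem prod_Icc_comp_add_one (f : ℤ → M) (a b : ℤ) :
    ∏ j ∈ Icc a (b - 1), f (j + 1) = ∏ j ∈ Icc (a + 1) b, f j := by
  simpa using (prod_Icc_comp_sub_one (fun j ↦ f (j + 1)) a b).symm

theorem prod_Icc_sub_one_mul_prod_Icc_add_one (f : ℤ → M) {k i n : ℤ} (hki : k ≤ i)
    (hin : i ≤ n) :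
    (∏ j ∈ Icc k (i - 1), f j) * ∏ j ∈ Icc (i + 1) n, f j = ∏ j ∈ (Icc k n).erase i, f j := by
  rw [← prod_union (disjoint_left.2 fun x hx hx' ↦ by simp only [mem_Icc] at hx hx'; omega)]
  congr 1
  ext x
  simp only [mem_union, mem_Icc, mem_erase]
  omega

theorem prod_Icc_mul_prod_Icc_eq_mul_prod_Ioo (f : ℤ → M) {k i n : ℤ} (hki : k ≤ i) (hin : i ≤ n)
    (hkn : k < n) :
    (∏ j ∈ Icc i (n - 1), f j) * ∏ j ∈ Icc (k + 1) i, f j = f i * ∏ j ∈ Ioo k n, f j := by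
  rcases hin.lt_or_eq with hin | rfl
  · rw [← insert_Icc_add_one_left_eq_Icc (by omega : i ≤ n - 1), prod_insert (by simp), mul_assoc,
      ← prod_union (disjoint_left.2 fun x hx hx' ↦ by simp only [mem_Icc] at hx hx'; omega)]
    congr 2
    ext x
    simp only [mem_union, mem_Icc, mem_Ioo]
    omega
  · rw [Icc_eq_empty (by omega), prod_empty, one_mul, ← insert_Icc_sub_one_right_eq_Icc (by omega),
      prod_insert (by simp)]
    congr 2
    ext x
    simp only [mem_Icc, mem_Ioo]
    omega

end Int

theorem inversion_summand_eq {K : Type*} [Field K] (a b m s : ℤ → K) {k i n : ℤ}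
    (hai : a i ≠ 0) (hbi : b i ≠ 0) (hki : k ≤ i) (hin : i ≤ n) (hkn : k < n) :
    ((b n / b i) *
      ∏ j ∈ Icc (i + 1) n,
        (m j * (s i - s (j - 1) + a (j - 1) * b (j - 1) * m (j - 1)) / (s i - s j))) *
    ((a k / a i) *
      ∏ j ∈ Icc k (i - 1),
        (m j * (s i - s (j + 1) + a (j + 1) * b (j + 1) * m (j + 1)) / (s i - s j)))
    = a k * b n * (∏ j ∈ Icc k n, m j) *
      ((∏ j ∈ Ioo k n, (s i - s j + a j * b j * m j)) / ∏ j ∈ (Icc k n).erase i, (s i - s j)) := by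
  set g : ℤ → K := fun j ↦ s i - s j + a j * b j * m j
  have hg : (∏ j ∈ Icc i (n - 1), g j) * ∏ j ∈ Icc (k + 1) i, g j
      = a i * b i * m i * ∏ j ∈ Ioo k n, g j := by
    rw [Int.prod_Icc_mul_prod_Icc_eq_mul_prod_Ioo g hki hin hkn]
    simp [g]
  have hm := Int.prod_Icc_sub_one_mul_prod_Icc_add_one m hki hin
  have hd := Int.prod_Icc_sub_one_mul_prod_Icc_add_one (fun j ↦ s i - s j) hki hin
  calc _ = a k * b n * ((∏ j ∈ Icc k (i - 1), m j) * ∏ j ∈ Icc (i + 1) n, m j) *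
        ((∏ j ∈ Icc i (n - 1), g j) * (∏ j ∈ Icc (k + 1) i, g j) / (a i * b i)) /
        ((∏ j ∈ Icc k (i - 1), (s i - s j)) * ∏ j ∈ Icc (i + 1) n, (s i - s j)) := by
        simp only [prod_div_distrib, prod_mul_distrib]
        rw [Int.prod_Icc_comp_sub_one g, Int.prod_Icc_comp_add_one g]
        ring
    _ = _ := by
        rw [hm, hd, hg, ← mul_prod_erase _ _ (mem_Icc.2 ⟨hki, hin⟩)]
        field_simp

/-- Theorem 1.3 of Wang–Ma: the general matrix inversion.
For sequences `a, b, m, s : ℤ → ℂ` with `a n ≠ 0`, `b n ≠ 0` and the `s n`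
pairwise distinct, the matrices
`F(n,k) = (b n / b k) * ∏_{i=k+1}^{n} m i * (s k - s (i-1) + a (i-1) b (i-1) m (i-1)) / (s k - s i)`
and
`G(n,k) = (a k / a n) * ∏_{i=k}^{n-1} m i * (s n - s (i+1) + a (i+1) b (i+1) m (i+1)) / (s n - s i)`
form a matrix inversion. -/
theorem general_matrix_inversion
    (a b m s : ℤ → ℂ)
    (ha : ∀ n : ℤ, a n ≠ 0) (hb : ∀ n : ℤ, b n ≠ 0)
    (hs : ∀ i j : ℤ, i ≠ j → s i ≠ s j) :
    ∀ k n : ℤ, k ≤ n →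
      (∑ i ∈ Finset.Icc k n,
        ((b n / b i) *
          ∏ j ∈ Finset.Icc (i + 1) n,
            (m j * (s i - s (j - 1) + a (j - 1) * b (j - 1) * m (j - 1)) / (s i - s j))) *
        ((a k / a i) *
          ∏ j ∈ Finset.Icc k (i - 1),
            (m j * (s i - s (j + 1) + a (j + 1) * b (j + 1) * m (j + 1)) / (s i - s j)))) =
      if n = k then 1 else 0 := by
  intro k n hkn
  rcases hkn.eq_or_lt with rfl | hkn
  · simp [ha k, hb k]
  have hinj : Set.InjOn s (Icc k n) := fun i _ j _ ↦ not_imp_not.1 (hs i j)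
  set P := Lagrange.nodal (Ioo k n) fun j ↦ s j - a j * b j * m j
  have hP : P.degree < ↑(#(Icc k n) - 1) := by
    rw [Lagrange.degree_nodal, Int.card_Ioo, Int.card_Icc]
    exact_mod_cast (by omega : (n - k - 1).toNat < (n + 1 - k).toNat - 1)
  have hsum := Lagrange.sum_eval_div_prod_sub_eq_zero hinj hP
  simp only [P, Lagrange.eval_nodal, ← sub_add] at hsum
  rw [if_neg hkn.ne', sum_congr rfl fun i hi ↦ inversion_summand_eq a b m s (ha i) (hb i)
    (mem_Icc.1 hi).1 (mem_Icc.1 hi).2 hkn, ← mul_sum, hsum, mul_zero]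
end

section
/- Let α, β : ℤ × ℤ → ℂ be double sequences such that β is antisymmetric (β(n,k) = −β(k,n) for all n,k), α(n,n) ≠ 0 for every integer n, and β(n,k) ≠ 0 whenever n ≠ k. Then α and β satisfy the quintuple sum identity (QSI) if and only if for all integers x, y, p: α(p,x)·β(y,p) + α(p,y)·β(p,x) + α(p,p)·β(x,y) = 0. -/
/-!
For antisymmetric `β`, every quintuple sum is a combination of the three-term expressions
`T(x, y, p) = α p x β y p + α p y β p x + α p p β x y`, which gives one direction. Conversely, the
quintuple sum at `(y, y, p, x)` is `-α y y β p y T(x, y, p)`, whose first factor is nonzero for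
`p ≠ y`; for `p = y`, `T` vanishes because `β p p = 0`.
-/

section QuintupleSum

variable {ι R : Type*} [CommRing R]

def quintupleSum (α β : ι → ι → R) (x y p q : ι) : R :=
  α x p * α p y * β x p * β q y + α x p * α p x * β q y * β p y
    - α x y * α p y * β x p * β q p - α x y * α p q * β x p * β p y
    - α x x * α p p * β q y * β p y

def threeTerm (α β : ι → ι → R) (x y p : ι) : R :=
  α p x * β y p + α p y * β p x + α p p * β x y

variable {α β : ι → ι → R}

theorem quintupleSum_eq_threeTerm_combination (hanti : ∀ n k, β n k = -β k n) (x y p q : ι) :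
    quintupleSum α β x y p q =
      -(α x p * β q y) * threeTerm α β x y p - α p p * β q y * threeTerm α β p y x
        + α x y * β x p * threeTerm α β q y p := by
  unfold quintupleSum threeTerm
  rw [hanti y p, hanti p x, hanti y x, hanti p q]
  ring

theorem quintupleSum_self_left (hanti : ∀ n k, β n k = -β k n) (x y p : ι) :
    α y y * β p y * threeTerm α β x y p = -quintupleSum α β y y p x := by
  unfold quintupleSum threeTerm
  rw [hanti y p, hanti p x]
  ring

theorem threeTerm_self_right [IsAddTorsionFree R] (hanti : ∀ n k, β n k = -β k n) (x p : ι) :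
    threeTerm α β x p p = 0 := by
  have hdiag : β p p = 0 := self_eq_neg.mp (hanti p p)
  unfold threeTerm
  rw [hdiag, hanti x p]
  ring

end QuintupleSum

/-- Lemma 3.2 (Wang–Ma): for antisymmetric `β` with `α n n ≠ 0` and
`β n k ≠ 0` for `n ≠ k`, the quintuple sum identity holds if and only if
`α p x * β y p + α p y * β p x + α p p * β x y = 0` for all integers `x, y, p`. -/
theorem QSI_iff_three_term
    (α β : ℤ → ℤ → ℂ)
    (hanti : ∀ n k : ℤ, β n k = -β k n)
    (hα : ∀ n : ℤ, α n n ≠ 0)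
    (hβ : ∀ n k : ℤ, n ≠ k → β n k ≠ 0) :
    (∀ x y p q : ℤ,
        α x p * α p y * β x p * β q y + α x p * α p x * β q y * β p y
          - α x y * α p y * β x p * β q p - α x y * α p q * β x p * β p y
          - α x x * α p p * β q y * β p y = 0)
      ↔ (∀ x y p : ℤ, α p x * β y p + α p y * β p x + α p p * β x y = 0) := by
  change (∀ x y p q, quintupleSum α β x y p q = 0) ↔ ∀ x y p, threeTerm α β x y p = 0
  constructor
  · intro hqsi x y p
    obtain rfl | hpy := eq_or_ne p y
    · exact threeTerm_self_right hanti x p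
    · have hfactor := quintupleSum_self_left (α := α) hanti x y p
      rw [hqsi, neg_zero] at hfactor
      exact (mul_eq_zero.mp hfactor).resolve_left (mul_ne_zero (hα y) (hβ p y hpy))
  · intro hthree x y p q
    simp [quintupleSum_eq_threeTerm_combination hanti, hthree]
end

section
/- Let α, β : ℤ × ℤ → ℂ be double sequences such that β is antisymmetric (β(n,k) = −β(k,n) for all n,k) and α(p,p) ≠ 0 for every integer p. Then α and β satisfy the triple sum identity (TSI) if and only if for all integers x, y, p: α(p,x)·β(y,p) + α(p,y)·β(p,x) + α(p,p)·β(x,y) = 0. -/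
/-!
Antisymmetry turns the three-term identity with pivot `n` into
`α n n * β x y = α n x * β n y - α n y * β n x`, so `α n n • β` is the array of `2 × 2` minors of
the two rows `α n ·`, `β n ·`. Multiplied by `α n n`, the triple sum therefore becomes a cyclic
sum of products of minors which cancels identically, and `α n n ≠ 0` can be cancelled.
-/

section TripleSum

variable {ι R : Type*} [CommRing R] (α β : ι → ι → R)

theorem diag_mul_eq_minor_of_three_term (hanti : ∀ n k, β n k = -β k n) {n x y : ι}
    (h : α n x * β y n + α n y * β n x + α n n * β x y = 0) :
    α n n * β x y = α n x * β n y - α n y * β n x := by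
  linear_combination h - α n x * hanti y n

theorem diag_mul_triple_sum_eq_zero {n : ι}
    (hminor : ∀ x y, α n n * β x y = α n x * β n y - α n y * β n x) (k p q : ι) :
    α n n * (α n p * β q k + α n q * β k p + α n k * β p q) = 0 := by
  linear_combination α n p * hminor q k + α n q * hminor k p + α n k * hminor p q

end TripleSum

/-- Lemma 3.3 (Wang–Ma): for antisymmetric `β` with `α p p ≠ 0` for all `p`,
the triple sum identity holds if and only if
`α p x * β y p + α p y * β p x + α p p * β x y = 0` for all integers `x, y, p`. -/
theorem TSI_iff_three_term
    (α β : ℤ → ℤ → ℂ)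
    (hanti : ∀ n k : ℤ, β n k = -β k n)
    (hα : ∀ p : ℤ, α p p ≠ 0) :
    (∀ n k p q : ℤ, α n p * β q k + α n q * β k p + α n k * β p q = 0)
      ↔ (∀ x y p : ℤ, α p x * β y p + α p y * β p x + α p p * β x y = 0) := by
  refine ⟨fun h x y p ↦ h p p x y, fun h n k p q ↦ ?_⟩
  have hminor x y := diag_mul_eq_minor_of_three_term α β hanti (h x y n)
  exact (mul_eq_zero.mp (diag_mul_triple_sum_eq_zero α β hminor k p q)).resolve_left (hα n)
end

section
/- Let α, β : ℤ × ℤ → ℂ be double sequences such that β is antisymmetric (β(n,k) = −β(k,n) for all n,k), α(n,n) ≠ 0 for every integer n, and β(n,k) ≠ 0 whenever n ≠ k. Then α and β satisfy the triple sum identity (TSI) if and only if they satisfy the quintuple sum identity (QSI). -/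
/-!
Both identities are polynomial in the values of `α` and `β`, and modulo antisymmetry of `β`:

* every instance of QSI is a combination of three instances of TSI;
* the instance `x = y` of QSI is `α y y * β y p` times the instance `(p, y, p, q)` of TSI;
* `α n n` times any instance of TSI is a combination of instances whose first and third
  indices agree.

Cancelling the nonzero factors `α y y`, `β y p` (for `y ≠ p`; for `y = p` that instance of TSI
vanishes because `β` is alternating) and `α n n` gives the converse.
-/

namespace SumIdentity

variable {ι R : Type*} [CommRing R] (α β : ι → ι → R)

def tripleSum (n k p q : ι) : R :=
  α n p * β q k + α n q * β k p + α n k * β p q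

def quintupleSum (x y p q : ι) : R :=
  α x p * α p y * β x p * β q y + α x p * α p x * β q y * β p y
    - α x y * α p y * β x p * β q p - α x y * α p q * β x p * β p y
    - α x x * α p p * β q y * β p y

variable {α β}

theorem quintupleSum_eq (hanti : ∀ n k, β n k = -β k n) (x y p q : ι) :
    quintupleSum α β x y p q =
      β x p * α x y * tripleSum α β p y p q + β q y * α x p * tripleSum α β p y x p
        - β q y * α p p * tripleSum α β x y x p := by
  unfold quintupleSum tripleSum
  linear_combination (-(α x y * α p y * β x p)) * hanti p q
    - (α x y * α p q * β x p) * hanti y p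

theorem quintupleSum_self_left (hanti : ∀ n k, β n k = -β k n) (y p q : ι) :
    quintupleSum α β y y p q = α y y * β y p * tripleSum α β p y p q := by
  unfold quintupleSum tripleSum
  rw [hanti p y, hanti q p]
  ring

theorem mul_tripleSum (hanti : ∀ n k, β n k = -β k n) (n k p q : ι) :
    α n n * tripleSum α β n k p q =
      α n p * tripleSum α β n k n q + α n q * tripleSum α β n p n k
        + α n k * tripleSum α β n q n p := by
  unfold tripleSum
  linear_combination (-(α n p * α n q)) * hanti k n - (α n p * α n k) * hanti n q
    - (α n q * α n k) * hanti p n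

theorem tripleSum_self (hanti : ∀ n k, β n k = -β k n) (hdiag : ∀ n, β n n = 0) (p q : ι) :
    tripleSum α β p p p q = 0 := by
  unfold tripleSum
  linear_combination α p p * hanti q p + α p q * hdiag p

theorem quintupleSum_eq_zero (hanti : ∀ n k, β n k = -β k n)
    (h : ∀ n k p q, tripleSum α β n k p q = 0) (x y p q : ι) :
    quintupleSum α β x y p q = 0 := by
  rw [quintupleSum_eq hanti, h, h, h]
  ring

variable [NoZeroDivisors R]

theorem tripleSum_self_left_eq_zero (hanti : ∀ n k, β n k = -β k n) (hdiag : ∀ n, β n n = 0)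
    (hα : ∀ n, α n n ≠ 0) (hβ : ∀ n k, n ≠ k → β n k ≠ 0)
    (h : ∀ x y p q, quintupleSum α β x y p q = 0) (p y q : ι) :
    tripleSum α β p y p q = 0 := by
  obtain rfl | hyp := eq_or_ne y p
  · exact tripleSum_self (α := α) hanti hdiag y q
  · have h_self := quintupleSum_self_left (α := α) hanti y p q
    rw [h] at h_self
    simpa [hα y, hβ y p hyp] using h_self.symm

theorem tripleSum_eq_zero_of_self_left (hanti : ∀ n k, β n k = -β k n)
    (hα : ∀ n, α n n ≠ 0) (h : ∀ n k q, tripleSum α β n k n q = 0) (n k p q : ι) :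
    tripleSum α β n k p q = 0 := by
  have h_mul := mul_tripleSum (α := α) hanti n k p q
  rw [h, h, h] at h_mul
  simpa [hα n] using h_mul

end SumIdentity

open SumIdentity in
/-- Proposition 3.4 (Wang–Ma): for antisymmetric `β` with `α n n ≠ 0` and
`β n k ≠ 0` for `n ≠ k`, the triple sum identity and the quintuple sum
identity are equivalent. -/
theorem TSI_iff_QSI
    (α β : ℤ → ℤ → ℂ)
    (hanti : ∀ n k : ℤ, β n k = -β k n)
    (hα : ∀ n : ℤ, α n n ≠ 0)
    (hβ : ∀ n k : ℤ, n ≠ k → β n k ≠ 0) :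
    (∀ n k p q : ℤ, α n p * β q k + α n q * β k p + α n k * β p q = 0)
      ↔ (∀ x y p q : ℤ,
          α x p * α p y * β x p * β q y + α x p * α p x * β q y * β p y
            - α x y * α p y * β x p * β q p - α x y * α p q * β x p * β p y
            - α x x * α p p * β q y * β p y = 0) := by
  have hdiag : ∀ n, β n n = 0 := fun n => self_eq_neg.mp (hanti n n)
  exact ⟨quintupleSum_eq_zero hanti, fun h =>
    tripleSum_eq_zero_of_self_left hanti hα (tripleSum_self_left_eq_zero hanti hdiag hα hβ h)⟩
end

section
/- Let α, β : ℤ × ℤ → ℂ be double sequences satisfying the triple sum identity (TSI), with β antisymmetric (β(n,k) = −β(k,n) for all n,k) and α(i,i) ≠ 0 for every integer i. Then for all integers k ≤ n: β(k,n) = ∑_{i=k+1}^{n} [ (α(i−1,k)/α(i−1,i−1)) · ∏_{j=i+1}^{n} (α(j−1,j)/α(j−1,j−1)) ] · β(i−1,i). -/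
/-!
Two specialisations of the triple sum identity do all the work. Taking three of the four indices
equal to the same `k` gives `3 α(k,k) β(k,k) = 0`, and then taking `n = q = k` gives
`α(k,k) (β(k,p) + β(p,k)) = 0`; so a nonvanishing diagonal of `α` already forces `β` to be
antisymmetric. With antisymmetry, the identity at `(n, k, n, n+1)` reads
`β(k,n+1) = r(n+1) β(k,n) + (α(n,k)/α(n,n)) β(n,n+1)` with `r(j) = α(j-1,j)/α(j-1,j-1)`, a
first-order linear recurrence in `n` starting from `β(k,k) = 0`, and the claimed formula is its
solution by variation of constants.
-/

open Finset

theorem Int.eq_sum_mul_prod_of_linear_recurrence {R : Type*} [CommSemiring R] {x r g : ℤ → R}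
    {k : ℤ} (h₀ : x k = 0) (hstep : ∀ n, k ≤ n → x (n + 1) = r (n + 1) * x n + g (n + 1))
    {n : ℤ} (hkn : k ≤ n) :
    x n = ∑ i ∈ Icc (k + 1) n, g i * ∏ j ∈ Icc (i + 1) n, r j := by
  induction n, hkn using Int.leInduction with
  | base => simp [h₀]
  | succ n hkn ih =>
    have hprod : ∀ i ∈ Icc (k + 1) n, ∏ j ∈ Icc (i + 1) (n + 1), r j
        = (∏ j ∈ Icc (i + 1) n, r j) * r (n + 1) := fun i hi => by
      rw [← insert_Icc_right_eq_Icc_add_one (by grind), prod_insert (by simp), mul_comm]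
    rw [hstep n hkn, ih, ← insert_Icc_right_eq_Icc_add_one (by omega), sum_insert (by simp),
      Icc_eq_empty_of_lt (lt_add_one _), prod_empty, mul_one, add_comm, mul_sum]
    congr 1
    refine sum_congr rfl fun i hi => ?_
    rw [hprod i hi]
    ring

def TripleSumIdentity {ι K : Type*} [Mul K] [Add K] [Zero K] (α β : ι → ι → K) : Prop :=
  ∀ n k p q, α n p * β q k + α n q * β k p + α n k * β p q = 0

namespace TripleSumIdentity

variable {ι K : Type*} [Field K] {α β : ι → ι → K}

theorem diag_eq_zero [NeZero (3 : K)] (h : TripleSumIdentity α β) (hα : ∀ i, α i i ≠ 0)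
    (k : ι) : β k k = 0 := by
  have h3 : 3 * α k k * β k k = 0 := by linear_combination h k k k k
  simpa [hα k, NeZero.ne (3 : K)] using h3

theorem antisymm [NeZero (3 : K)] (h : TripleSumIdentity α β) (hα : ∀ i, α i i ≠ 0)
    (k p : ι) : β k p = -β p k := by
  have hsum : α k k * (β k p + β p k) = 0 := by
    linear_combination h k k p k - α k p * h.diag_eq_zero hα k
  rw [eq_neg_iff_add_eq_zero]
  simpa [hα k] using hsum

theorem mul_diag_mul_eq [NeZero (3 : K)] (h : TripleSumIdentity α β) (hα : ∀ i, α i i ≠ 0)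
    (m k l : ι) : α m m * β k l = α m l * β k m + α m k * β m l := by
  linear_combination -h m k m l + α m m * h.antisymm hα l k

end TripleSumIdentity

theorem beta_recurrence_general
    (α β : ℤ → ℤ → ℂ)
    (hTSI : ∀ n k p q : ℤ, α n p * β q k + α n q * β k p + α n k * β p q = 0)
    (hα : ∀ i : ℤ, α i i ≠ 0) :
    ∀ k n : ℤ, k ≤ n →
      β k n =
        ∑ i ∈ Finset.Icc (k + 1) n,
          ((α (i - 1) k / α (i - 1) (i - 1)) *
            ∏ j ∈ Finset.Icc (i + 1) n, (α (j - 1) j / α (j - 1) (j - 1))) *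
          β (i - 1) i := by
  intro k n hkn
  have hstep (n : ℤ) : β k (n + 1) = α n (n + 1) / α n n * β k n
      + α n k / α n n * β n (n + 1) := by
    have hαn := hα n
    field_simp
    linear_combination TripleSumIdentity.mul_diag_mul_eq hTSI hα n k (n + 1)
  rw [Int.eq_sum_mul_prod_of_linear_recurrence (TripleSumIdentity.diag_eq_zero hTSI hα k)
    (r := fun j => α (j - 1) j / α (j - 1) (j - 1))
    (g := fun i => α (i - 1) k / α (i - 1) (i - 1) * β (i - 1) i) (fun n _ => by simpa using hstep n) hkn]
  exact sum_congr rfl fun i _ => by ring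

/-- Proposition 3.5 (Wang–Ma): if `α, β` satisfy the triple sum identity,
`β` is antisymmetric and `α i i ≠ 0` for all `i`, then for `k ≤ n`:
`β k n = ∑_{i=k+1}^{n} (α (i-1) k / α (i-1) (i-1)) *
  (∏_{j=i+1}^{n} α (j-1) j / α (j-1) (j-1)) * β (i-1) i`. -/
theorem beta_recurrence
    (α β : ℤ → ℤ → ℂ)
    (hTSI : ∀ n k p q : ℤ, α n p * β q k + α n q * β k p + α n k * β p q = 0)
    (hanti : ∀ n k : ℤ, β n k = -β k n)
    (hα : ∀ i : ℤ, α i i ≠ 0) :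
    ∀ k n : ℤ, k ≤ n →
      β k n =
        ∑ i ∈ Finset.Icc (k + 1) n,
          ((α (i - 1) k / α (i - 1) (i - 1)) *
            ∏ j ∈ Finset.Icc (i + 1) n, (α (j - 1) j / α (j - 1) (j - 1))) *
          β (i - 1) i :=
  beta_recurrence_general α β hTSI hα
end

section
/- Let x, y : ℤ → ℂ be sequences with x(i) ≠ 0 and y(i) ≠ 0 for all integers i, and let P, Q : ℤ → ℂ be the unique nowhere-zero functions with P(0) = Q(0) = 1 and P(i) = P(i−1)·x(i), Q(i) = Q(i−1)·y(i) for all integers i (so P(n) and Q(k) realize the bilateral products ∏_{i=1}^{n} x(i) and ∏_{i=1}^{k} y(i)). Define α(k,n) = P(n)/Q(k) for all integers k, n, and let β : ℤ × ℤ → ℂ be antisymmetric (β(n,k) = −β(k,n)). Then α and β satisfy the triple sum identity (TSI) if and only if for all integers k ≤ n: β(k,n) = ∑_{i=k+1}^{n} β(i−1,i) · P(n)·P(k) / (P(i)·P(i−1)). -/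
/-!
Evaluating at `n = 0` and dividing by `P a * P b * P c` turns the triple sum identity into the
cocycle condition `γ a b + γ b c + γ c a = 0` for `γ a b = β a b / (P a * P b)`. For an
antisymmetric `γ` this means `γ k n = γ 0 n - γ 0 k`, so `γ k n` telescopes to
`∑_{k < i ≤ n} γ (i-1) i`. Conversely, that formula makes `γ` additive along `a ≤ b ≤ c`, which
together with antisymmetry again gives `γ k n = γ 0 n - γ 0 k`.
-/

open Finset

theorem Finset.sum_Ioc_add_sum_Ioc {α M : Type*} [LinearOrder α] [LocallyFiniteOrder α]
    [AddCommMonoid M] (f : α → M) {a b c : α} (hab : a ≤ b) (hbc : b ≤ c) :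
    ∑ i ∈ Ioc a b, f i + ∑ i ∈ Ioc b c, f i = ∑ i ∈ Ioc a c, f i := by
  rw [← Ioc_union_Ioc_eq_Ioc hab hbc, sum_union (Ioc_disjoint_Ioc_of_le le_rfl)]

theorem Int.sum_Ioc_sub_eq_sub {G : Type*} [AddCommGroup G] (f : ℤ → G) {k n : ℤ} (h : k ≤ n) :
    ∑ i ∈ Ioc k n, (f i - f (i - 1)) = f n - f k := by
  induction n, h using Int.leInduction with
  | base => simp
  | succ n hkn ih =>
    rw [← insert_Ioc_right_eq_Ioc_add_one hkn, sum_insert (by simp), ih, add_sub_cancel_right]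
    abel

section Cocycle

variable {G : Type*} [AddCommGroup G] {γ : ℤ → ℤ → G}

theorem eq_sub_of_add_add_eq_zero (hanti : ∀ a b, γ a b = -γ b a)
    (hcoc : ∀ a b c, γ a b + γ b c + γ c a = 0) (k n : ℤ) : γ k n = γ 0 n - γ 0 k := by
  rw [← sub_eq_zero, ← hcoc 0 k n, hanti n 0]
  abel

theorem eq_sub_of_add_of_le (hanti : ∀ a b, γ a b = -γ b a)
    (hadd : ∀ a b c, a ≤ b → b ≤ c → γ a c = γ a b + γ b c) (k n : ℤ) :
    γ k n = γ 0 n - γ 0 k := by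
  wlog hkn : k ≤ n generalizing k n
  · rw [hanti, this n k (le_of_not_ge hkn)]
    abel
  rcases le_total 0 k with h0k | hk0
  · rw [hadd 0 k n h0k hkn]
    abel
  rcases le_total 0 n with h0n | hn0
  · rw [hadd k 0 n hk0 h0n, hanti k 0]
    abel
  · rw [hanti 0 n, hanti 0 k, hadd k n 0 hkn hn0]
    abel

theorem add_add_eq_zero_iff_eq_sum (hanti : ∀ a b, γ a b = -γ b a) :
    (∀ a b c, γ a b + γ b c + γ c a = 0) ↔
      ∀ k n, k ≤ n → γ k n = ∑ i ∈ Icc (k + 1) n, γ (i - 1) i := by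
  simp only [Icc_add_one_left_eq_Ioc]
  constructor
  · intro hcoc k n hkn
    have hE := eq_sub_of_add_add_eq_zero hanti hcoc
    rw [hE k n, ← Int.sum_Ioc_sub_eq_sub (γ 0) hkn]
    exact sum_congr rfl fun i _ => (hE _ _).symm
  · intro hsum a b c
    have hadd : ∀ a b c : ℤ, a ≤ b → b ≤ c → γ a c = γ a b + γ b c := fun a b c hab hbc => by
      rw [hsum a c (hab.trans hbc), hsum a b hab, hsum b c hbc, sum_Ioc_add_sum_Ioc _ hab hbc]
    rw [eq_sub_of_add_of_le hanti hadd a b, eq_sub_of_add_of_le hanti hadd b c,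
      eq_sub_of_add_of_le hanti hadd c a]
    abel

end Cocycle

section Field

variable {K : Type*} [Field K]

def divProd (P : ℤ → K) (β : ℤ → ℤ → K) (a b : ℤ) : K :=
  β a b / (P a * P b)

variable {P : ℤ → K} {β : ℤ → ℤ → K}

theorem divProd_antisymm (hanti : ∀ a b, β a b = -β b a) (a b : ℤ) :
    divProd P β a b = -divProd P β b a := by
  rw [divProd, divProd, hanti, mul_comm, neg_div]

theorem mul_add_mul_add_mul_eq (hP : ∀ i, P i ≠ 0) (a b c : ℤ) :
    P c * β a b + P a * β b c + P b * β c a =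
      P a * P b * P c * (divProd P β a b + divProd P β b c + divProd P β c a) := by
  have := hP a; have := hP b; have := hP c
  simp only [divProd]
  field_simp

theorem eq_sum_iff_divProd_eq_sum (hP : ∀ i, P i ≠ 0) (k n : ℤ) :
    β k n = ∑ i ∈ Icc (k + 1) n, β (i - 1) i * (P n * P k / (P i * P (i - 1))) ↔
      divProd P β k n = ∑ i ∈ Icc (k + 1) n, divProd P β (i - 1) i := by
  have hβ : β k n = P k * P n * divProd P β k n := by
    rw [divProd, mul_div_cancel₀ _ (mul_ne_zero (hP k) (hP n))]
  have hsum : ∑ i ∈ Icc (k + 1) n, β (i - 1) i * (P n * P k / (P i * P (i - 1))) =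
      P k * P n * ∑ i ∈ Icc (k + 1) n, divProd P β (i - 1) i := by
    rw [mul_sum]
    refine sum_congr rfl fun i _ => ?_
    rw [divProd, mul_comm (P (i - 1))]
    ring
  rw [hβ, hsum, mul_right_inj' (mul_ne_zero (hP k) (hP n))]

theorem forall_mul_add_mul_add_mul_eq_zero_iff (hP : ∀ i, P i ≠ 0) :
    (∀ k p q : ℤ, P p * β q k + P q * β k p + P k * β p q = 0) ↔
      ∀ a b c, divProd P β a b + divProd P β b c + divProd P β c a = 0 := by
  refine forall_congr' fun k => forall_congr' fun p => forall_congr' fun q => ?_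
  have hPPP : P q * P k * P p ≠ 0 := mul_ne_zero (mul_ne_zero (hP q) (hP k)) (hP p)
  rw [mul_add_mul_add_mul_eq hP q k p, mul_eq_zero, or_iff_right hPPP, add_rotate]

theorem forall_div_add_div_add_div_eq_zero_iff {Q : ℤ → K} (hQ0 : Q 0 = 1) :
    (∀ n k p q : ℤ, (P p / Q n) * β q k + (P q / Q n) * β k p + (P k / Q n) * β p q = 0) ↔
      ∀ k p q : ℤ, P p * β q k + P q * β k p + P k * β p q = 0 := by
  have hdiv : ∀ n k p q : ℤ,
      (P p / Q n) * β q k + (P q / Q n) * β k p + (P k / Q n) * β p q =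
        (P p * β q k + P q * β k p + P k * β p q) / Q n := fun _ _ _ _ => by ring
  simp only [hdiv]
  constructor
  · intro h k p q
    simpa [hQ0] using h 0 k p q
  · intro h n k p q
    rw [h, zero_div]

end Field

theorem bilateral_product_TSI_iff_general
    (P Q : ℤ → ℂ)
    (hQ0 : Q 0 = 1)
    (hPne : ∀ i : ℤ, P i ≠ 0)
    (β : ℤ → ℤ → ℂ)
    (hanti : ∀ n k : ℤ, β n k = -β k n) :
    (∀ n k p q : ℤ,
        (P p / Q n) * β q k + (P q / Q n) * β k p + (P k / Q n) * β p q = 0)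
      ↔ (∀ k n : ℤ, k ≤ n →
          β k n =
            ∑ i ∈ Finset.Icc (k + 1) n,
              β (i - 1) i * (P n * P k / (P i * P (i - 1)))) := by
  rw [forall_div_add_div_add_div_eq_zero_iff hQ0, forall_mul_add_mul_add_mul_eq_zero_iff hPne,
    add_add_eq_zero_iff_eq_sum (divProd_antisymm hanti)]
  simp only [eq_sum_iff_divProd_eq_sum hPne]

/-- Corollary 3.6 (Wang–Ma): with `α k n = P n / Q k` where `P`, `Q` are the
nowhere-zero bilateral products of the nonzero sequences `x`, `y`
(`P 0 = Q 0 = 1`, `P i = P (i-1) * x i`, `Q i = Q (i-1) * y i`), and `β`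
antisymmetric, `α` and `β` satisfy the triple sum identity if and only if
`β k n = ∑_{i=k+1}^{n} β (i-1) i * P n * P k / (P i * P (i-1))` for all `k ≤ n`. -/
theorem bilateral_product_TSI_iff
    (x y : ℤ → ℂ) (hx : ∀ i : ℤ, x i ≠ 0) (hy : ∀ i : ℤ, y i ≠ 0)
    (P Q : ℤ → ℂ)
    (hP0 : P 0 = 1) (hQ0 : Q 0 = 1)
    (hPne : ∀ i : ℤ, P i ≠ 0) (hQne : ∀ i : ℤ, Q i ≠ 0)
    (hP : ∀ i : ℤ, P i = P (i - 1) * x i)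
    (hQ : ∀ i : ℤ, Q i = Q (i - 1) * y i)
    (β : ℤ → ℤ → ℂ)
    (hanti : ∀ n k : ℤ, β n k = -β k n) :
    (∀ n k p q : ℤ,
        (P p / Q n) * β q k + (P q / Q n) * β k p + (P k / Q n) * β p q = 0)
      ↔ (∀ k n : ℤ, k ≤ n →
          β k n =
            ∑ i ∈ Finset.Icc (k + 1) n,
              β (i - 1) i * (P n * P k / (P i * P (i - 1)))) :=
  bilateral_product_TSI_iff_general P Q hQ0 hPne β hanti
end

section
/- Let α, β : ℤ × ℤ → ℂ be double sequences with β antisymmetric (β(n,k) = −β(k,n)), α(n,n) ≠ 0 for all n, and β(n,k) ≠ 0 whenever n ≠ k. Suppose the matrices F and G with entries F(n,k) = (∏_{i=k}^{n−1} α(i,k)) / (∏_{i=k+1}^{n} β(i,k)) and G(n,k) = (α(k,k)/α(n,n)) · (∏_{i=k+1}^{n} α(i,n)) / (∏_{i=k}^{n−1} β(i,n)) (for k ≤ n) form a matrix inversion. Then for all integers n > k: ∑_{i=k}^{n} f(k,n;i) = 0, where f(k,n;i) = (−1)^{n−i} · [ ∏_{(j₁,j₂): k ≤ j₁ < j₂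 ≤ n, j₁ ≠ i, j₂ ≠ i} β(j₁,j₂) ] · [ ∏_{j=k+1}^{n−1} α(j,i) ]. -/
/-!
Write `Δ = ∏_{k ≤ j₁ < j₂ ≤ n} β(j₁,j₂)`. Splitting off from `Δ` the factors that involve `i`
and turning `β(i,j)` into `-β(j,i)` by antisymmetry gives, for `k ≤ i ≤ n`,
`α(k,k) · f(k,n;i) = Δ · F(n,i) · G(i,k)`; the sign `(-1)^{n-i}` of `f` is exactly the one
produced by the `n - i` swaps. Summing over `i`, the inversion relation at `(n,k)` with `n ≠ k`
gives `α(k,k) · ∑ᵢ f(k,n;i) = 0`, and `α(k,k) ≠ 0`.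
-/

open Finset

noncomputable def fAux (α β : ℤ → ℤ → ℂ) (k n i : ℤ) : ℂ :=
  (-1 : ℂ) ^ (n - i) *
    (∏ p ∈ (Finset.Icc k n ×ˢ Finset.Icc k n).filter
        (fun p => p.1 < p.2 ∧ p.1 ≠ i ∧ p.2 ≠ i), β p.1 p.2) *
    ∏ j ∈ Finset.Icc (k + 1) (n - 1), α j i

section CommMonoid

variable {M : Type*} [CommMonoid M]

lemma prod_pairs_eq_prod_pairs_avoiding_mul (β : ℤ → ℤ → M) {k n i : ℤ}
    (hki : k ≤ i) (hin : i ≤ n) :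
    ∏ p ∈ (Icc k n ×ˢ Icc k n).filter (fun p => p.1 < p.2), β p.1 p.2 =
      (∏ p ∈ (Icc k n ×ˢ Icc k n).filter (fun p => p.1 < p.2 ∧ p.1 ≠ i ∧ p.2 ≠ i),
          β p.1 p.2) *
        ((∏ j ∈ Icc k (i - 1), β j i) * ∏ j ∈ Icc (i + 1) n, β i j) := by
  have hpairs_through_i :
      (Icc k n ×ˢ Icc k n).filter (fun p => p.1 < p.2 ∧ ¬(p.1 ≠ i ∧ p.2 ≠ i)) =
        (Icc k (i - 1)).image (fun j => (j, i)) ∪ (Icc (i + 1) n).image (Prod.mk i) := by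
    ext ⟨a, b⟩
    simp only [mem_filter, mem_product, mem_union, mem_image, mem_Icc, Prod.mk.injEq,
      ↓existsAndEq, true_and, and_true]
    omega
  have hdisj : Disjoint ((Icc k (i - 1)).image (fun j => (j, i)))
      ((Icc (i + 1) n).image (Prod.mk i)) := by
    simp only [disjoint_left, mem_image, mem_Icc]
    rintro _ ⟨j, hj, rfl⟩ ⟨j', hj', hjj'⟩
    simp only [Prod.mk.injEq] at hjj'
    omega
  rw [← prod_filter_mul_prod_filter_not _ (fun p => p.1 ≠ i ∧ p.2 ≠ i), filter_filter,
    filter_filter, hpairs_through_i, prod_union hdisj,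
    prod_image (Prod.mk_left_injective i).injOn, prod_image (Prod.mk_right_injective i).injOn]

lemma prod_Icc_mul_prod_Icc_eq_mul_prod_Icc (a : ℤ → M) {k i n : ℤ}
    (hki : k ≤ i) (hin : i ≤ n) (hkn : k < n) :
    (∏ j ∈ Icc i (n - 1), a j) * ∏ j ∈ Icc (k + 1) i, a j =
      a i * ∏ j ∈ Icc (k + 1) (n - 1), a j := by
  rcases hin.eq_or_lt with rfl | hlt
  · rw [Icc_eq_empty (by omega), prod_empty, one_mul,
      ← insert_Icc_sub_one_right_eq_Icc (by omega : k + 1 ≤ i), prod_insert (by simp)]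
  · have hsplit : Icc (k + 1) (n - 1) = Icc (k + 1) i ∪ Icc (i + 1) (n - 1) := by
      ext; simp only [mem_Icc, mem_union]; omega
    have hdisj : Disjoint (Icc (k + 1) i) (Icc (i + 1) (n - 1)) := by
      simp only [disjoint_left, mem_Icc]; omega
    rw [← insert_Icc_add_one_left_eq_Icc (by omega : i ≤ n - 1), prod_insert (by simp),
      hsplit, prod_union hdisj]
    ac_rfl

end CommMonoid

lemma prod_apply_swap_of_antisymm {ι R : Type*} [CommRing R] {β : ι → ι → R}
    (hanti : ∀ a b, β a b = -β b a) (s : Finset ι) (i : ι) :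
    ∏ j ∈ s, β i j = (-1) ^ #s * ∏ j ∈ s, β j i := by
  simp only [hanti i, prod_neg]

noncomputable def invF (α β : ℤ → ℤ → ℂ) (n k : ℤ) : ℂ :=
  (∏ j ∈ Icc k (n - 1), α j k) / ∏ j ∈ Icc (k + 1) n, β j k

noncomputable def invG (α β : ℤ → ℤ → ℂ) (n k : ℤ) : ℂ :=
  (α k k / α n n) * (∏ j ∈ Icc (k + 1) n, α j n) / ∏ j ∈ Icc k (n - 1), β j n

lemma mul_fAux_eq_prod_pairs_mul_invF_mul_invG {α β : ℤ → ℤ → ℂ}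
    (hanti : ∀ n k : ℤ, β n k = -β k n) (hβ : ∀ n k : ℤ, n ≠ k → β n k ≠ 0)
    {k n i : ℤ} (hαi : α i i ≠ 0) (hki : k ≤ i) (hin : i ≤ n) (hkn : k < n) :
    α k k * fAux α β k n i =
      (∏ p ∈ (Icc k n ×ˢ Icc k n).filter (fun p => p.1 < p.2), β p.1 p.2) *
        (invF α β n i * invG α β i k) := by
  have hL : ∏ j ∈ Icc k (i - 1), β j i ≠ 0 :=
    prod_ne_zero_iff.mpr fun j hj => hβ j i (by rw [mem_Icc] at hj; omega)
  have hR : ∏ j ∈ Icc (i + 1) n, β j i ≠ 0 :=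
    prod_ne_zero_iff.mpr fun j hj => hβ j i (by rw [mem_Icc] at hj; omega)
  have hsign : (-1 : ℂ) ^ (n - i) = (-1) ^ #(Icc (i + 1) n) := by
    rw [Int.card_Icc, add_sub_add_right_eq_sub, ← zpow_natCast,
      Int.toNat_of_nonneg (by omega)]
  have hα := prod_Icc_mul_prod_Icc_eq_mul_prod_Icc (α · i) hki hin hkn
  rw [prod_pairs_eq_prod_pairs_avoiding_mul β hki hin, prod_apply_swap_of_antisymm hanti,
    fAux, hsign, invF, invG]
  field_simp
  rw [mul_assoc _ (∏ j ∈ Icc i (n - 1), α j i), hα]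
  ring

/-- Equation (3.20) of Wang–Ma: if `α, β` (with `β` antisymmetric, `α n n ≠ 0`,
`β n k ≠ 0` for `n ≠ k`) give rise to an `(α,β)`-matrix inversion, then for
all `n > k`, `∑_{i=k}^{n} f(k,n;i) = 0`. -/
theorem sum_fAux_eq_zero
    (α β : ℤ → ℤ → ℂ)
    (hanti : ∀ n k : ℤ, β n k = -β k n)
    (hα : ∀ n : ℤ, α n n ≠ 0)
    (hβ : ∀ n k : ℤ, n ≠ k → β n k ≠ 0)
    (hinv : ∀ k n : ℤ, k ≤ n →
      (∑ i ∈ Finset.Icc k n,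
        ((∏ j ∈ Finset.Icc i (n - 1), α j i) / (∏ j ∈ Finset.Icc (i + 1) n, β j i)) *
        ((α k k / α i i) *
          (∏ j ∈ Finset.Icc (k + 1) i, α j i) / (∏ j ∈ Finset.Icc k (i - 1), β j i))) =
      if n = k then 1 else 0) :
    ∀ k n : ℤ, k < n → ∑ i ∈ Finset.Icc k n, fAux α β k n i = 0 := by
  intro k n hkn
  have hFG : ∑ i ∈ Icc k n, invF α β n i * invG α β i k = 0 :=
    (hinv k n hkn.le).trans (if_neg hkn.ne')
  have hsum : α k k * ∑ i ∈ Icc k n, fAux α β k n i = 0 := by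
    rw [mul_sum, sum_congr rfl fun i hi => mul_fAux_eq_prod_pairs_mul_invF_mul_invG hanti hβ
      (hα i) (mem_Icc.mp hi).1 (mem_Icc.mp hi).2 hkn, ← mul_sum, hFG, mul_zero]
  exact (mul_eq_zero.mp hsum).resolve_left (hα k)
end

section
/- Let p, q, x, y ∈ ℂ with |p| < 1, q ≠ 0, x ≠ 0, y ≠ 0, and assume θ(x q^i; p) ≠ 0 and θ(y q^i; p) ≠ 0 for every integer i. Let (x; q, p)_• : ℤ → ℂ be the unique function with (x; q, p)_0 = 1 and (x; q, p)_i = (x; q, p)_{i−1} · θ(x q^{i−1}; p) for all integers i, and define (y; q, p)_• analogously. Let t : ℤ → ℂ be an arbitrary sequence, define S(k,n) = ∑_{i=k+1}^{n} t(i) / ( (x; q, p)_{i−1} · (x; q, p)_i ) for integers k ≤ n, and set S(n,k) = −S(k,n) for k < n; assume S(i,k) ≠ 0 for all integers i ≠ k. For integers k ≤ n define F(n,k) = ∏_{i=k+1}^{n} 1 / ( (x; q, p)_i · (y; q, p)_{i−1} · S(i,k) ) and G(n,k) = ∏_{i=k}^{n−1} 1 / ( (x; q, p)_{i+1} · (y;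 q, p)_i · S(i,n) ). Then for all integers k ≤ n, ∑_{i=k}^{n} F(n,i)·G(i,k) equals 1 if n = k and equals 0 if n > k. -/
/-- The modified Jacobi theta function
`θ(z; p) = ∏_{i=0}^{∞} (1 - z p^i)(1 - (p/z) p^i)`. -/
noncomputable def modJacobiTheta (z p : ℂ) : ℂ :=
  ∏' i : ℕ, ((1 - z * p ^ i) * (1 - (p / z) * p ^ i))

/-!
Write `v m = S k m`. Additivity of the partial sums together with antisymmetry gives
`S j i = v i - v j` for all `i, j ≥ k`, and after this substitution the factors `Px`, `Py` of
`F(n,i) G(i,k)` no longer depend on `i`. What remains is `∑ᵢ ∏_{j ≠ i} (v i - v j)⁻¹`, the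
coefficient of `X ^ (n - k)` in the Lagrange interpolation of the constant polynomial `1`
at the nodes `v k, …, v n`, which vanishes as soon as there are at least two nodes.
-/

open Finset

theorem Lagrange.sum_inv_prod_sub {F ι : Type*} [Field F] [DecidableEq ι] {s : Finset ι}
    {v : ι → F} (hvs : Set.InjOn v s) (hs : s.Nonempty) :
    ∑ i ∈ s, (∏ j ∈ s.erase i, (v i - v j))⁻¹ = if #s = 1 then 1 else 0 := by
  have h := Lagrange.coeff_eq_sum hvs (P := 1)
    (by rw [Polynomial.degree_one]; exact_mod_cast hs.card_pos)
  simp only [Polynomial.eval_one, one_div, Polynomial.coeff_one] at h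
  rw [← h]
  exact if_congr (by have := hs.card_pos; omega) rfl rfl

section IntervalProducts

variable {M : Type*} [CommMonoid M] {k i n : ℤ}

@[to_additive sum_Icc_add_one_add_sum_Icc_add_one]
theorem prod_Icc_add_one_mul_prod_Icc_add_one (f : ℤ → M) (hki : k ≤ i) (hin : i ≤ n) :
    (∏ j ∈ Icc (i + 1) n, f j) * ∏ j ∈ Icc (k + 1) i, f j = ∏ j ∈ Icc (k + 1) n, f j := by
  rw [← prod_union (disjoint_left.2 fun m hm hm' => by simp only [mem_Icc] at hm hm'; omega)]
  congr 1
  ext m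
  simp only [mem_union, mem_Icc]
  omega

theorem prod_Icc_add_one_mul_prod_Icc_shift (f : ℤ → M) (hki : k ≤ i) (hin : i ≤ n) :
    (∏ j ∈ Icc (i + 1) n, f j) * ∏ j ∈ Icc k (i - 1), f (j + 1) =
      ∏ j ∈ Icc (k + 1) n, f j := by
  rw [← prod_Icc_add_one_mul_prod_Icc_add_one f hki hin, ← sub_add_cancel i 1,
    ← map_add_right_Icc, prod_map, sub_add_cancel]
  rfl

theorem prod_Icc_add_one_mul_prod_Icc_sub_one (f : ℤ → M) (hki : k ≤ i) (hin : i ≤ n) :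
    (∏ j ∈ Icc (i + 1) n, f j) * ∏ j ∈ Icc k (i - 1), f j = ∏ j ∈ (Icc k n).erase i, f j := by
  rw [← prod_union (disjoint_left.2 fun m hm hm' => by simp only [mem_Icc] at hm hm'; omega)]
  congr 1
  ext m
  simp only [mem_union, mem_Icc, mem_erase]
  omega

end IntervalProducts

theorem eq_sub_of_sum_Icc_of_antisymm {G : Type*} [AddCommGroup G] {S : ℤ → ℤ → G}
    {u : ℤ → G} (hS : ∀ k n : ℤ, k ≤ n → S k n = ∑ i ∈ Icc (k + 1) n, u i)
    (hSanti : ∀ k n : ℤ, k < n → S n k = -S k n) {k a b : ℤ} (ha : k ≤ a) (hb : k ≤ b) :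
    S a b = S k b - S k a := by
  have hsplit : ∀ a b, k ≤ a → a ≤ b → S a b = S k b - S k a := fun a b ha hab => by
    rw [hS a b hab, hS k b (ha.trans hab), hS k a ha,
      ← sum_Icc_add_one_add_sum_Icc_add_one u ha hab, add_sub_cancel_right]
  rcases le_or_gt a b with hab | hba
  · exact hsplit a b ha hab
  · rw [hSanti b a hba, hsplit b a hb hba.le, neg_sub]

theorem prod_one_div_mul_prod_one_div_shift {K : Type*} [Field K] (c R : ℤ → K) {k i n : ℤ}
    (hki : k ≤ i) (hin : i ≤ n) :
    (∏ j ∈ Icc (i + 1) n, 1 / (c j * R j)) * ∏ j ∈ Icc k (i - 1), 1 / (c (j + 1) * R j) =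
      (∏ j ∈ Icc (k + 1) n, (c j)⁻¹) * ∏ j ∈ (Icc k n).erase i, (R j)⁻¹ := by
  simp only [one_div, mul_inv, prod_mul_distrib]
  rw [← prod_Icc_add_one_mul_prod_Icc_shift (fun j => (c j)⁻¹) hki hin,
    ← prod_Icc_add_one_mul_prod_Icc_sub_one (fun j => (R j)⁻¹) hki hin]
  ring

theorem new_elliptic_matrix_inversion_general
    (Px Py : ℤ → ℂ)
    (t : ℤ → ℂ)
    (S : ℤ → ℤ → ℂ)
    (hS : ∀ k n : ℤ, k ≤ n →
      S k n = ∑ i ∈ Finset.Icc (k + 1) n, t i / (Px (i - 1) * Px i))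
    (hSanti : ∀ k n : ℤ, k < n → S n k = -S k n)
    (hSne : ∀ i k : ℤ, i ≠ k → S i k ≠ 0) :
    ∀ k n : ℤ, k ≤ n →
      (∑ i ∈ Finset.Icc k n,
        -- F(n,i)
        (∏ j ∈ Finset.Icc (i + 1) n, 1 / (Px j * Py (j - 1) * S j i)) *
        -- G(i,k)
        (∏ j ∈ Finset.Icc k (i - 1), 1 / (Px (j + 1) * Py j * S j i))) =
      if n = k then 1 else 0 := by
  intro k n hkn
  have hdiff : ∀ a ∈ Icc k n, ∀ b ∈ Icc k n, S a b = S k b - S k a := fun a ha b hb =>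
    eq_sub_of_sum_Icc_of_antisymm hS hSanti (mem_Icc.1 ha).1 (mem_Icc.1 hb).1
  have hinj : Set.InjOn (S k) (Icc k n : Set ℤ) := fun a ha b hb hab => by
    by_contra hne
    exact hSne a b hne (by rw [hdiff a ha b hb, hab, sub_self])
  let c : ℤ → ℂ := fun j => Px j * Py (j - 1)
  calc _ = ∑ i ∈ Icc k n, (∏ j ∈ Icc (k + 1) n, (c j)⁻¹) *
          (∏ j ∈ (Icc k n).erase i, (S k i - S k j))⁻¹ := sum_congr rfl fun i hi => by
        obtain ⟨hki, hin⟩ := mem_Icc.1 hi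
        have := prod_one_div_mul_prod_one_div_shift c (fun j => S j i) hki hin
        simp only [c, add_sub_cancel_right] at this
        rw [this, ← prod_inv_distrib]
        exact congrArg _ (prod_congr rfl fun j hj => by rw [hdiff j (mem_of_mem_erase hj) i hi])
    _ = (∏ j ∈ Icc (k + 1) n, (c j)⁻¹) * if #(Icc k n) = 1 then 1 else 0 := by
        rw [← mul_sum, Lagrange.sum_inv_prod_sub hinj (nonempty_Icc.2 hkn)]
    _ = if n = k then 1 else 0 := by
        rw [if_congr (show #(Icc k n) = 1 ↔ n = k by rw [Int.card_Icc]; omega) rfl rfl]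
        split_ifs with hnk
        · simp [hnk]
        · exact mul_zero _

/-- Example 4.4 of Wang–Ma: a new elliptic matrix inversion.
Here `Px i` realizes the bilateral elliptic shifted factorial `(x; q, p)_i`
(so `Px 0 = 1` and `Px i = Px (i-1) * θ(x q^{i-1}; p)` for all `i : ℤ`),
similarly `Py`, and `S k n = ∑_{i=k+1}^{n} t i / (Px (i-1) * Px i)` for
`k ≤ n`, extended antisymmetrically. -/
theorem new_elliptic_matrix_inversion
    (p q x y : ℂ)
    (hp : ‖p‖ < 1) (hq : q ≠ 0) (hx : x ≠ 0) (hy : y ≠ 0)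
    (hθx : ∀ i : ℤ, modJacobiTheta (x * q ^ i) p ≠ 0)
    (hθy : ∀ i : ℤ, modJacobiTheta (y * q ^ i) p ≠ 0)
    (Px Py : ℤ → ℂ)
    (hPx0 : Px 0 = 1)
    (hPx : ∀ i : ℤ, Px i = Px (i - 1) * modJacobiTheta (x * q ^ (i - 1)) p)
    (hPy0 : Py 0 = 1)
    (hPy : ∀ i : ℤ, Py i = Py (i - 1) * modJacobiTheta (y * q ^ (i - 1)) p)
    (t : ℤ → ℂ)
    (S : ℤ → ℤ → ℂ)
    (hS : ∀ k n : ℤ, k ≤ n →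
      S k n = ∑ i ∈ Finset.Icc (k + 1) n, t i / (Px (i - 1) * Px i))
    (hSanti : ∀ k n : ℤ, k < n → S n k = -S k n)
    (hSne : ∀ i k : ℤ, i ≠ k → S i k ≠ 0) :
    ∀ k n : ℤ, k ≤ n →
      (∑ i ∈ Finset.Icc k n,
        -- F(n,i)
        (∏ j ∈ Finset.Icc (i + 1) n, 1 / (Px j * Py (j - 1) * S j i)) *
        -- G(i,k)
        (∏ j ∈ Finset.Icc k (i - 1), 1 / (Px (j + 1) * Py j * S j i))) =
      if n = k then 1 else 0 :=
  new_elliptic_matrix_inversion_general Px Py t S hS hSanti hSne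
end

section
/- Let q ∈ ℂ with |q| < 1, and let a, b : ℤ → ℂ be sequences such that a(n) + Θ(q; b(n)) ≠ 0 for every integer n and Θ(q; b(i)) ≠ Θ(q; b(k)) for all integers i ≠ k. For integers k ≤ n define F(n,k) = [ ∏_{i=k}^{n−1} ( a(i) + Θ(q; b(k)) ) ] / [ ∏_{i=k+1}^{n} ( Θ(q; b(i)) − Θ(q; b(k)) ) ] and G(n,k) = [ ( a(k) + Θ(q; b(k)) ) / ( a(n) + Θ(q; b(n)) ) ] · [ ∏_{i=k+1}^{n} ( a(i) + Θ(q; b(n)) ) ] / [ ∏_{i=k}^{n−1} ( Θ(q; b(i)) − Θ(q; b(n)) ) ]. Then for all integers k ≤ n, ∑_{i=k}^{n} F(n,i)·G(i,k) equals 1 if n = k and equals 0 if n > k. -/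
open Polynomial Finset

lemma coeff_lagrange_basis {s : Finset ℤ} {v : ℤ → ℂ} {i : ℤ}
    (hi : i ∈ s) :
    (Lagrange.basis s v i).coeff (s.card - 1) = ∏ j ∈ s.erase i, (v i - v j)⁻¹ := by
  have h : Lagrange.basis s v i
      = C (∏ j ∈ s.erase i, (v i - v j)⁻¹) * Lagrange.nodal (s.erase i) v := by
    rw [Lagrange.basis, Lagrange.nodal, map_prod, ← Finset.prod_mul_distrib]
    exact Finset.prod_congr rfl fun j _ => rfl
  rw [h, Polynomial.coeff_C_mul]
  have hm : (Lagrange.nodal (s.erase i) v).Monic := Lagrange.nodal_monic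
  have hd : (Lagrange.nodal (s.erase i) v).natDegree = s.card - 1 := by
    rw [Lagrange.natDegree_nodal, Finset.card_erase_of_mem hi]
  rw [← hd, hm.coeff_natDegree, mul_one]

lemma lagrange_sum (s : Finset ℤ) (v : ℤ → ℂ) (hvs : Set.InjOn v s) (P : Polynomial ℂ)
    (hP : P.degree < ((s.card - 1 : ℕ) : WithBot ℕ)) :
    ∑ i ∈ s, P.eval (v i) * ∏ j ∈ s.erase i, (v i - v j)⁻¹ = 0 := by
  have hP' : P.degree < (s.card : WithBot ℕ) := by
    refine hP.trans_le ?_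
    exact_mod_cast Nat.sub_le _ _
  have h := Lagrange.eq_interpolate hvs hP'
  have h2 : (Lagrange.interpolate s v (fun i => P.eval (v i))).coeff (s.card - 1)
      = ∑ i ∈ s, P.eval (v i) * ∏ j ∈ s.erase i, (v i - v j)⁻¹ := by
    rw [Lagrange.interpolate_apply, Polynomial.finset_sum_coeff]
    exact Finset.sum_congr rfl fun i hi => by
      rw [Polynomial.coeff_C_mul, coeff_lagrange_basis hi]
  rw [← h2, ← h]
  exact Polynomial.coeff_eq_zero_of_degree_lt hP

lemma prod_sub_swap (s : Finset ℤ) (c : ℤ → ℂ) (x : ℂ) :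
    ∏ j ∈ s, (c j - x) = (-1) ^ s.card * ∏ j ∈ s, (x - c j) := by
  rw [← Finset.prod_const (-1 : ℂ), ← Finset.prod_mul_distrib]
  exact Finset.prod_congr rfl fun j _ => by ring

lemma key_inversion (a c : ℤ → ℂ) (ha : ∀ n, a n + c n ≠ 0)
    (hc : ∀ i k : ℤ, i ≠ k → c i ≠ c k) (k n : ℤ) (hkn : k < n) :
    ∑ i ∈ Finset.Icc k n,
        ((∏ j ∈ Finset.Icc i (n - 1), (a j + c i)) /
          (∏ j ∈ Finset.Icc (i + 1) n, (c j - c i))) *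
        (((a k + c k) / (a i + c i)) *
          (∏ j ∈ Finset.Icc (k + 1) i, (a j + c i)) /
          (∏ j ∈ Finset.Icc k (i - 1), (c j - c i))) = 0 := by
  have hv : Set.InjOn c (Finset.Icc k n : Set ℤ) := fun i _ j _ h => by
    by_contra hne; exact hc i j hne h
  set P : Polynomial ℂ := ∏ j ∈ Finset.Ioc k (n - 1), (X + C (a j)) with hP
  have hPm : P.Monic := monic_prod_of_monic _ _ fun j _ => monic_X_add_C _
  have hPnd : P.natDegree = (Finset.Ioc k (n - 1)).card := by
    rw [hP, natDegree_prod_of_monic _ _ fun j _ => monic_X_add_C _]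
    simp [natDegree_X_add_C]
  have hdeg : P.degree < (((Finset.Icc k n).card - 1 : ℕ) : WithBot ℕ) := by
    rw [Polynomial.degree_eq_natDegree hPm.ne_zero, hPnd, Nat.cast_lt]
    rw [Int.card_Ioc, Int.card_Icc]
    omega
  have hN : ((-1 : ℂ)) ^ ((n - k).toNat) * (-1) ^ ((n - k).toNat) = 1 := by
    rw [← mul_pow]; norm_num
  have hterm : ∀ i ∈ Finset.Icc k n,
      ((∏ j ∈ Finset.Icc i (n - 1), (a j + c i)) /
          (∏ j ∈ Finset.Icc (i + 1) n, (c j - c i))) *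
        (((a k + c k) / (a i + c i)) *
          (∏ j ∈ Finset.Icc (k + 1) i, (a j + c i)) /
          (∏ j ∈ Finset.Icc k (i - 1), (c j - c i)))
      = ((a k + c k) * (-1) ^ ((n - k).toNat)) *
          (P.eval (c i) * ∏ j ∈ (Finset.Icc k n).erase i, (c i - c j)⁻¹) := by
    intro i hi
    rw [Finset.mem_Icc] at hi
    obtain ⟨hki, hin⟩ := hi
    -- numerator merge
    have h1 : (∏ j ∈ Finset.Icc i (n - 1), (a j + c i)) *
        (∏ j ∈ Finset.Icc (k + 1) i, (a j + c i))
        = (a i + c i) * ∏ j ∈ Finset.Icc (k + 1) (n - 1), (a j + c i) := by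
      rcases eq_or_lt_of_le hin with rfl | hin'
      · have he : Finset.Icc i (i - 1) = ∅ := Finset.Icc_eq_empty (by omega)
        have hins : Finset.Icc (k + 1) i = insert i (Finset.Icc (k + 1) (i - 1)) := by
          ext j; simp [Finset.mem_Icc]; omega
        have hnm : i ∉ Finset.Icc (k + 1) (i - 1) := by simp [Finset.mem_Icc]
        rw [he, Finset.prod_empty, one_mul, hins, Finset.prod_insert hnm]
      · have hins : Finset.Icc i (n - 1) = insert i (Finset.Icc (i + 1) (n - 1)) := by
          ext j; simp [Finset.mem_Icc]; omega
        have hnm : i ∉ Finset.Icc (i + 1) (n - 1) := by simp [Finset.mem_Icc]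
        have hun : Finset.Icc (k + 1) i ∪ Finset.Icc (i + 1) (n - 1)
            = Finset.Icc (k + 1) (n - 1) := by
          ext j; simp [Finset.mem_Icc]; omega
        have hdj : Disjoint (Finset.Icc (k + 1) i) (Finset.Icc (i + 1) (n - 1)) := by
          rw [Finset.disjoint_left]; intro x hx hx'
          simp [Finset.mem_Icc] at hx hx'; omega
        rw [hins, Finset.prod_insert hnm, ← hun, Finset.prod_union hdj]
        ring
    -- denominator merge
    have e1 : Finset.Icc k (i - 1) = Finset.Ico k i := by
      ext j; simp [Finset.mem_Icc, Finset.mem_Ico]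
    have e2 : Finset.Icc (i + 1) n = Finset.Ioc i n := by
      ext j; simp [Finset.mem_Icc, Finset.mem_Ioc]
    have e3 : (Finset.Icc k n).erase i = Finset.Ico k i ∪ Finset.Ioc i n := by
      ext j
      simp [Finset.mem_erase, Finset.mem_Icc, Finset.mem_Ico, Finset.mem_Ioc]
      omega
    have hdj2 : Disjoint (Finset.Ico k i) (Finset.Ioc i n) := by
      rw [Finset.disjoint_left]; intro x hx hx'
      simp [Finset.mem_Ico, Finset.mem_Ioc] at hx hx'; omega
    have hcard : (Finset.Ico k i).card + (Finset.Ioc i n).card = (n - k).toNat := by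
      rw [Int.card_Ico, Int.card_Ioc]; omega
    have h2 : (∏ j ∈ Finset.Icc (i + 1) n, (c j - c i)) *
        (∏ j ∈ Finset.Icc k (i - 1), (c j - c i))
        = (-1) ^ ((n - k).toNat) * ∏ j ∈ (Finset.Icc k n).erase i, (c i - c j) := by
      rw [e1, e2, prod_sub_swap, prod_sub_swap, e3, Finset.prod_union hdj2, ← hcard,
        pow_add]
      ring
    -- eval of P
    have h3 : P.eval (c i) = ∏ j ∈ Finset.Icc (k + 1) (n - 1), (a j + c i) := by
      have e4 : Finset.Ioc k (n - 1) = Finset.Icc (k + 1) (n - 1) := by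
        ext j; simp [Finset.mem_Icc, Finset.mem_Ioc]
      rw [hP, eval_prod, e4]
      exact Finset.prod_congr rfl fun j _ => by simp [add_comm]
    -- nonvanishing
    have hD : (∏ j ∈ (Finset.Icc k n).erase i, (c i - c j)) ≠ 0 := by
      rw [Finset.prod_ne_zero_iff]
      intro j hj
      rw [Finset.mem_erase] at hj
      exact sub_ne_zero_of_ne (hc i j (Ne.symm hj.1))
    have h3' : (∏ j ∈ Finset.Icc (i + 1) n, (c j - c i)) ≠ 0 := by
      rw [Finset.prod_ne_zero_iff]
      intro j hj
      rw [Finset.mem_Icc] at hj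
      exact sub_ne_zero_of_ne (hc j i (by omega))
    have h4' : (∏ j ∈ Finset.Icc k (i - 1), (c j - c i)) ≠ 0 := by
      rw [Finset.prod_ne_zero_iff]
      intro j hj
      rw [Finset.mem_Icc] at hj
      exact sub_ne_zero_of_ne (hc j i (by omega))
    have hAi := ha i
    have hinv : ((-1 : ℂ) ^ ((n - k).toNat))⁻¹ = (-1) ^ ((n - k).toNat) :=
      inv_eq_of_mul_eq_one_right hN
    have hAA : (a i + c i) * (a i + c i)⁻¹ = 1 := mul_inv_cancel₀ hAi
    rw [h3, Finset.prod_inv_distrib]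
    calc (∏ j ∈ Finset.Icc i (n - 1), (a j + c i)) /
          (∏ j ∈ Finset.Icc (i + 1) n, (c j - c i)) *
        ((a k + c k) / (a i + c i) * (∏ j ∈ Finset.Icc (k + 1) i, (a j + c i)) /
          (∏ j ∈ Finset.Icc k (i - 1), (c j - c i)))
        = ((a k + c k) * ((∏ j ∈ Finset.Icc i (n - 1), (a j + c i)) *
            (∏ j ∈ Finset.Icc (k + 1) i, (a j + c i)))) *
          ((a i + c i) * ((∏ j ∈ Finset.Icc (i + 1) n, (c j - c i)) *
            (∏ j ∈ Finset.Icc k (i - 1), (c j - c i))))⁻¹ := by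
          simp only [div_eq_mul_inv, mul_inv]; ring
      _ = ((a k + c k) * ((a i + c i) * ∏ j ∈ Finset.Icc (k + 1) (n - 1), (a j + c i))) *
          ((a i + c i) * ((-1) ^ ((n - k).toNat) *
            ∏ j ∈ (Finset.Icc k n).erase i, (c i - c j)))⁻¹ := by rw [h1, h2]
      _ = (a k + c k) * (-1) ^ ((n - k).toNat) *
          ((∏ j ∈ Finset.Icc (k + 1) (n - 1), (a j + c i)) *
            (∏ j ∈ (Finset.Icc k n).erase i, (c i - c j))⁻¹) := by
          simp only [mul_inv, hinv]
          linear_combination ((a k + c k) * (∏ j ∈ Finset.Icc (k + 1) (n - 1), (a j + c i)) *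
            (-1) ^ ((n - k).toNat) *
            (∏ j ∈ (Finset.Icc k n).erase i, (c i - c j))⁻¹) * hAA
  rw [Finset.sum_congr rfl hterm, ← Finset.mul_sum,
    lagrange_sum (Finset.Icc k n) c hv P hdeg, mul_zero]

/-- The partial theta function `Θ(q; z) = ∑_{m=0}^{∞} (-1)^m q^{m(m-1)/2} z^m`. -/
noncomputable def partialTheta (q z : ℂ) : ℂ :=
  ∑' m : ℕ, (-1 : ℂ) ^ m * q ^ (m * (m - 1) / 2) * z ^ m

/-- Example 4.5 of Wang–Ma: the partial-theta matrix inversion arising from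
Schilling and Warnaar's partial theta function identity. -/
theorem partial_theta_matrix_inversion
    (q : ℂ) (hq : ‖q‖ < 1)
    (a b : ℤ → ℂ)
    (ha : ∀ n : ℤ, a n + partialTheta q (b n) ≠ 0)
    (hb : ∀ i k : ℤ, i ≠ k → partialTheta q (b i) ≠ partialTheta q (b k)) :
    ∀ k n : ℤ, k ≤ n →
      (∑ i ∈ Finset.Icc k n,
        -- F(n,i)
        ((∏ j ∈ Finset.Icc i (n - 1), (a j + partialTheta q (b i))) /
          (∏ j ∈ Finset.Icc (i + 1) n, (partialTheta q (b j) - partialTheta q (b i)))) *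
        -- G(i,k)
        (((a k + partialTheta q (b k)) / (a i + partialTheta q (b i))) *
          (∏ j ∈ Finset.Icc (k + 1) i, (a j + partialTheta q (b i))) /
          (∏ j ∈ Finset.Icc k (i - 1), (partialTheta q (b j) - partialTheta q (b i))))) =
      if n = k then 1 else 0 := by
  intro k n hkn
  rcases eq_or_lt_of_le hkn with rfl | hlt
  · rw [if_pos rfl, Finset.Icc_self, Finset.sum_singleton,
      show Finset.Icc k (k - 1) = ∅ from Finset.Icc_eq_empty (by omega),
      show Finset.Icc (k + 1) k = ∅ from Finset.Icc_eq_empty (by omega)]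
    simp [div_self (ha k)]
  · rw [if_neg (by omega)]
    exact key_inversion a (fun i => partialTheta q (b i)) ha hb k n hlt
end

section
/- Let W : ℤ → ℂ be a sequence such that W(−n) = −W(n) for every integer n, W(n) ≠ 0 for every integer n ≥ 1, and for all integers k, p, q: W(k)²·W(p+q)·W(p−q) + W(p)²·W(q+k)·W(q−k) + W(q)²·W(k+p)·W(k−p) = 0. For integers 1 ≤ k ≤ n define F(n,k) = W(k)^{2(n−k)} / ( ∏_{i=2k+1}^{n+k} W(i) · ∏_{i=1}^{n−k} W(i) ) and G(n,k) = (−1)^{n−k} · ( W(k)² / W(n)² ) · W(n)^{2(n−k)} · ∏_{i=1}^{n+k−1} W(i) / ( ∏_{i=1}^{2n−1} W(i) · ∏_{i=1}^{n−k} W(i) ). Then for all integers 1 ≤ k ≤ n, ∑_{i=k}^{n} F(n,i)·G(i,k) equals 1 if n = k and equals 0 if n > k. -/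
/-!
Write `FG n k` for the `(n, k)` entry of the product `F G`, and note that `W 0 = 0` since `W` is
odd. Passing from `F(n, i)` to `F(n - 1, i)` multiplies the `i`-th term by
`W(n+i) W(n-i) / W(i)²`, and passing from `G(i, k)` to `G(i, k + 1)` multiplies it by
`-(W(k+1)/W(k))² W(i+k) W(i-k) / W(i)²`; the boundary terms that enter or leave the sums carry the
factor `W 0`. The elliptic relation
`W(n+k) W(n-k) W(i)² = W(k)² W(n+i) W(n-i) + W(n)² W(i+k) W(i-k)` therefore gives
`W(n+k) W(n-k) FG(n, k) = W(k)² FG(n-1, k) - (W(k) W(n) / W(k+1))² FG(n, k+1)`,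
and `FG(n, k) = [n = k]` follows by induction on `n - k`.
-/

open Finset

theorem Finset.prod_Icc_eq_prod_Icc_sub_one_mul {M : Type*} [CommMonoid M] (f : ℤ → M)
    {a b : ℤ} (h : a ≤ b) : ∏ j ∈ Icc a b, f j = (∏ j ∈ Icc a (b - 1), f j) * f b := by
  rw [← insert_Icc_sub_one_right_eq_Icc h, prod_insert (by simp), mul_comm]

theorem IsEllipticSequence.of_odd {R : Type*} [CommRing R] {W : ℤ → R} (hodd : W.Odd)
    (h : ∀ k p q : ℤ, W k ^ 2 * W (p + q) * W (p - q) + W p ^ 2 * W (q + k) * W (q - k) +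
      W q ^ 2 * W (k + p) * W (k - p) = 0) :
    IsEllipticSequence W := by
  intro p q r
  have h' := h r p q
  rw [← neg_sub p r, hodd, add_comm r p] at h'
  simp only [IsEllipticNet.rel, add_zero]
  linear_combination h'

namespace EDSInversion

variable {K : Type*} [Field K] (W : ℤ → K)

noncomputable def F (n k : ℤ) : K :=
  W k ^ (2 * (n - k)) /
    ((∏ j ∈ Icc (2 * k + 1) (n + k), W j) * ∏ j ∈ Icc 1 (n - k), W j)

noncomputable def G (n k : ℤ) : K :=
  (-1) ^ (n - k) * (W k ^ 2 / W n ^ 2) *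
    (W n ^ (2 * (n - k)) * ∏ j ∈ Icc 1 (n + k - 1), W j) /
    ((∏ j ∈ Icc 1 (2 * n - 1), W j) * ∏ j ∈ Icc 1 (n - k), W j)

noncomputable def FG (n k : ℤ) : K := ∑ i ∈ Icc k n, F W n i * G W i k

theorem F_self (n : ℤ) : F W n n = 1 := by
  simp [F, Icc_eq_empty (show ¬ 2 * n + 1 ≤ n + n by omega)]

variable {W} (hW : ∀ n : ℤ, 1 ≤ n → W n ≠ 0)
include hW

theorem prod_Icc_ne_zero {a : ℤ} (ha : 1 ≤ a) (b : ℤ) : ∏ j ∈ Icc a b, W j ≠ 0 :=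
  prod_ne_zero_iff.2 fun j hj => hW j (ha.trans (mem_Icc.1 hj).1)

theorem G_self {n : ℤ} (hn : 1 ≤ n) : G W n n = 1 := by
  have := prod_Icc_ne_zero hW le_rfl (2 * n - 1)
  have := hW n hn
  simp [G, ← two_mul]
  field_simp

theorem F_sub_one {n i : ℤ} (hi : 1 ≤ i) (hin : i < n) :
    F W (n - 1) i = F W n i * (W (n + i) * W (n - i)) / W i ^ 2 := by
  have := prod_Icc_ne_zero hW (by omega : 1 ≤ 2 * i + 1) (n - 1 + i)
  have := prod_Icc_ne_zero hW le_rfl (n - 1 - i)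
  have := hW (n + i) (by omega)
  have := hW (n - i) (by omega)
  have hWi := hW i hi
  rw [F, F, prod_Icc_eq_prod_Icc_sub_one_mul _ (by omega : 2 * i + 1 ≤ n + i),
    prod_Icc_eq_prod_Icc_sub_one_mul _ (by omega : 1 ≤ n - i),
    show 2 * (n - i) = 2 * (n - 1 - i) + 2 by ring, zpow_add₀ hWi,
    show n + i - 1 = n - 1 + i by ring, show n - i - 1 = n - 1 - i by ring]
  field_simp

theorem G_add_one {i k : ℤ} (hk : 1 ≤ k) (hki : k < i) :
    G W i (k + 1) =
      G W i k * (-(W (k + 1) ^ 2 / W k ^ 2)) * (W (i + k) * W (i - k) / W i ^ 2) := by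
  have := prod_Icc_ne_zero hW le_rfl (i + k - 1)
  have := prod_Icc_ne_zero hW le_rfl (2 * i - 1)
  have := prod_Icc_ne_zero hW le_rfl (i - (k + 1))
  have := hW (i + k) (by omega)
  have := hW (i - k) (by omega)
  have := hW k hk
  have hWi := hW i (by omega)
  rw [G, G, show i + (k + 1) - 1 = i + k by ring,
    prod_Icc_eq_prod_Icc_sub_one_mul _ (by omega : 1 ≤ i + k),
    prod_Icc_eq_prod_Icc_sub_one_mul _ (by omega : 1 ≤ i - k),
    show i - k - 1 = i - (k + 1) by ring,
    show (-1 : K) ^ (i - k) = (-1) ^ (i - (k + 1)) * (-1) by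
      rw [← zpow_add_one₀ (by norm_num)]; ring_nf,
    show W i ^ (2 * (i - k)) = W i ^ (2 * (i - (k + 1))) * W i ^ 2 by
      rw [← zpow_natCast, ← zpow_add₀ hWi]; ring_nf]
  field_simp

variable (h0 : W 0 = 0)
include h0

theorem FG_sub_one {n k : ℤ} (hk : 1 ≤ k) (hkn : k ≤ n) :
    FG W (n - 1) k = ∑ i ∈ Icc k n, F W n i * G W i k * (W (n + i) * W (n - i) / W i ^ 2) := by
  rw [← insert_Icc_sub_one_right_eq_Icc hkn, sum_insert (by simp), sub_self, h0, FG]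
  simp only [mul_zero, zero_div, zero_add]
  refine sum_congr rfl fun i hi => ?_
  rw [mem_Icc] at hi
  rw [F_sub_one hW (by omega) (by omega), mul_div_assoc]
  ring

theorem FG_add_one {n k : ℤ} (hk : 1 ≤ k) (hkn : k ≤ n) :
    FG W n (k + 1) = ∑ i ∈ Icc k n, F W n i * G W i k *
      (-(W (k + 1) ^ 2 / W k ^ 2) * (W (i + k) * W (i - k) / W i ^ 2)) := by
  rw [← insert_Icc_add_one_left_eq_Icc hkn, sum_insert (by simp), sub_self, h0, FG]
  simp only [mul_zero, zero_div, zero_add]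
  refine sum_congr rfl fun i hi => ?_
  rw [mem_Icc] at hi
  rw [G_add_one hW hk (by omega)]
  ring

theorem FG_recurrence (hE : IsEllipticSequence W) {n k : ℤ} (hk : 1 ≤ k) (hkn : k ≤ n) :
    W (n + k) * W (n - k) * FG W n k =
      W k ^ 2 * FG W (n - 1) k - (W k * W n / W (k + 1)) ^ 2 * FG W n (k + 1) := by
  rw [FG_sub_one hW h0 hk hkn, FG_add_one hW h0 hk hkn, FG, mul_sum, mul_sum, mul_sum,
    ← sum_sub_distrib]
  refine sum_congr rfl fun i hi => ?_
  have := hW k hk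
  have := hW (k + 1) (by omega)
  have := hW i (hk.trans (mem_Icc.1 hi).1)
  have h := hE n i k
  simp only [IsEllipticNet.rel, add_zero] at h
  field_simp
  linear_combination -(F W n i * G W i k) * h

theorem FG_eq_ite (hE : IsEllipticSequence W) {n k : ℤ} (hk : 1 ≤ k) (hkn : k ≤ n) :
    FG W n k = if n = k then 1 else 0 := by
  obtain ⟨d, rfl⟩ : ∃ d : ℕ, n = k + d := ⟨(n - k).toNat, by omega⟩
  clear hkn
  induction d generalizing k with
  | zero => simp [FG, F_self, G_self hW hk]
  | succ d ih =>
    set n := k + ((d + 1 : ℕ) : ℤ)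
    have hrec := FG_recurrence hW h0 hE (n := n) hk (by omega)
    have hpred : FG W (n - 1) k = if d = 0 then 1 else 0 := by
      rw [show n - 1 = k + d by omega, ih hk]
      simp
    have hsucc : FG W n (k + 1) = if d = 0 then 1 else 0 := by
      rw [show n = k + 1 + d by omega, ih (by omega)]
      simp
    have hvanish : W (n + k) * W (n - k) * FG W n k = 0 := by
      rw [hrec, hpred, hsucc]
      split_ifs with hd
      · have : W n = W (k + 1) := congrArg W (by omega)
        rw [this, mul_div_cancel_right₀ _ (hW (k + 1) (by omega))]
        ring
      · ring
    rw [if_neg (by omega)]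
    exact (mul_eq_zero.1 hvanish).resolve_left
      (mul_ne_zero (hW _ (by omega)) (hW _ (by omega)))

end EDSInversion

/-- Example 4.6 of Wang–Ma: the matrix inversion for elliptic divisibility
sequences. -/
theorem eds_matrix_inversion
    (W : ℤ → ℂ)
    (hodd : ∀ n : ℤ, W (-n) = -W n)
    (hW : ∀ n : ℤ, 1 ≤ n → W n ≠ 0)
    (hprop : ∀ k p q : ℤ,
      W k ^ 2 * W (p + q) * W (p - q) + W p ^ 2 * W (q + k) * W (q - k) +
        W q ^ 2 * W (k + p) * W (k - p) = 0) :
    ∀ k n : ℤ, 1 ≤ k → k ≤ n →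
      (∑ i ∈ Finset.Icc k n,
        -- F(n,i)
        (W i ^ (2 * (n - i)) /
          ((∏ j ∈ Finset.Icc (2 * i + 1) (n + i), W j) *
            ∏ j ∈ Finset.Icc 1 (n - i), W j)) *
        -- G(i,k)
        ((-1 : ℂ) ^ (i - k) * (W k ^ 2 / W i ^ 2) *
          (W i ^ (2 * (i - k)) * ∏ j ∈ Finset.Icc 1 (i + k - 1), W j) /
          ((∏ j ∈ Finset.Icc 1 (2 * i - 1), W j) *
            ∏ j ∈ Finset.Icc 1 (i - k), W j))) =
      if n = k then 1 else 0 := fun _ _ hk hkn =>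
  EDSInversion.FG_eq_ite hW (Function.Odd.map_zero hodd) (.of_odd hodd hprop) hk hkn
end
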